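/- Let L: (ℓ^p)^m → ℝ (for 1 ≤ p < ∞) be a continuous symmetric m-linear map with associated polynomial L̂, and let x_1, ..., x_n be norm-one vectors in ℓ^p with pairwise disjoint supports. If k_1,...,k_n are nonnegative integers with k_1 + ⋯ + k_n = m, then |L(x_1^{k_1} ⋯ x_n^{k_n})| ≤ (k_1^{k_1} ⋯ k_n^{k_n} / m!) · n^{m/p} · ‖L̂‖. -/
import Mathlib

open ENNReal


noncomputable def sgn (e : Bool) : ℝ := if e then 1 else -1

lemma sgn_abs (e : Bool) : |sgn e| = 1 := by cases e <;> simp [sgn]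

lemma sum_sgn_pow (c : ℕ) : (∑ e : Bool, sgn e ^ c) = if Even c then 2 else 0 := by
  rcases Nat.even_or_odd c with h | h <;>
    simp [sgn, h, h.neg_one_pow, Nat.not_even_iff_odd.mpr, h.neg_one_pow]

lemma coeff_lemma (m : ℕ) (f : Fin m → Fin m) :
    (∑ ε : Fin m → Bool, (∏ i, sgn (ε i)) * ∏ i, sgn (ε (f i)))
      = if Function.Bijective f then 2 ^ m else 0 := by
  classical
  have key : ∀ ε : Fin m → Bool, (∏ i, sgn (ε i)) * ∏ i, sgn (ε (f i))
      = ∏ j, sgn (ε j) ^ (1 + (Finset.univ.filter fun i => f i = j).card) := by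
    intro ε
    have h1 : (∏ i, sgn (ε (f i)))
        = ∏ j, sgn (ε j) ^ (Finset.univ.filter fun i => f i = j).card := by
      rw [← Finset.prod_fiberwise_of_maps_to (g := f) (t := Finset.univ)
        (fun i _ => Finset.mem_univ _) (fun i => sgn (ε (f i)))]
      refine Finset.prod_congr rfl fun j _ => ?_
      rw [Finset.prod_congr rfl (fun i hi => by
        rw [(Finset.mem_filter.mp hi).2]), Finset.prod_const]
    rw [h1, ← Finset.prod_mul_distrib]
    exact Finset.prod_congr rfl fun j _ => by rw [pow_add, pow_one]
  simp_rw [key]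
  rw [← Fintype.piFinset_univ, Finset.sum_prod_piFinset Finset.univ
    (fun j e => sgn e ^ (1 + (Finset.univ.filter fun i => f i = j).card))]
  simp_rw [sum_sgn_pow]
  by_cases hbij : Function.Bijective f
  · rw [if_pos hbij]
    have hc : ∀ j, (Finset.univ.filter fun i => f i = j).card = 1 := by
      intro j
      rw [Finset.card_eq_one]
      obtain ⟨i, hi⟩ := hbij.surjective j
      exact ⟨i, by ext i'; simp [Finset.mem_filter, hbij.injective.eq_iff, ← hi,
        eq_comm (a := i')]⟩
    simp [hc, Finset.prod_const]
  · rw [if_neg hbij]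
    have : ¬ Function.Surjective f := fun hs =>
      hbij (Finite.surjective_iff_bijective.mp hs)
    simp only [Function.Surjective, not_forall] at this
    obtain ⟨j, hj⟩ := this
    push_neg at hj
    refine Finset.prod_eq_zero (Finset.mem_univ j) ?_
    have : (Finset.univ.filter fun i => f i = j).card = 0 := by
      rw [Finset.card_eq_zero]
      ext i; simp only [Finset.mem_filter, Finset.mem_univ, true_and,
        Finset.notMem_empty, iff_false]; exact hj i
    rw [this]
    simp

lemma polarization {E : Type*} [NormedAddCommGroup E] [NormedSpace ℝ E] (m : ℕ)
    (L : ContinuousMultilinearMap ℝ (fun _ : Fin m => E) ℝ)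
    (hsymm : ∀ (σ : Equiv.Perm (Fin m)) (v : Fin m → E),
      L (fun i => v (σ i)) = L v)
    (y : Fin m → E) :
    (2 ^ m * m.factorial : ℝ) * L y
      = ∑ ε : Fin m → Bool, (∏ i, sgn (ε i)) * L (fun _ => ∑ i, sgn (ε i) • y i) := by
  classical
  have expand : ∀ ε : Fin m → Bool, L (fun _ => ∑ i, sgn (ε i) • y i)
      = ∑ f : Fin m → Fin m, (∏ i, sgn (ε (f i))) * L (fun i => y (f i)) := by
    intro ε
    have := L.toMultilinearMap.map_sum (α := fun _ : Fin m => Fin m)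
      (g := fun _ i => sgn (ε i) • y i)
    simp only [ContinuousMultilinearMap.coe_coe] at this
    rw [this]
    refine Finset.sum_congr rfl fun f _ => ?_
    have h2 := L.toMultilinearMap.map_smul_univ (fun i => sgn (ε (f i)))
      (fun i => y (f i))
    simp only [ContinuousMultilinearMap.coe_coe, smul_eq_mul] at h2
    rw [h2]
  simp_rw [expand, Finset.mul_sum, ← mul_assoc]
  rw [Finset.sum_comm]
  simp_rw [← Finset.sum_mul, coeff_lemma]
  simp_rw [ite_mul, zero_mul]
  rw [← Finset.sum_filter]
  have hperm : (∑ σ : Equiv.Perm (Fin m), (2:ℝ) ^ m * L y)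
      = ∑ f ∈ Finset.univ.filter (fun f : Fin m → Fin m => Function.Bijective f),
        (2:ℝ) ^ m * L (fun i => y (f i)) := by
    refine Finset.sum_bij (fun (σ : Equiv.Perm (Fin m)) _ => ⇑σ) ?_ ?_ ?_ ?_
    · intro σ _; exact Finset.mem_filter.mpr ⟨Finset.mem_univ _, σ.bijective⟩
    · intro σ _ τ _ h; exact Equiv.coe_fn_injective h
    · intro f hf
      refine ⟨Equiv.ofBijective f (Finset.mem_filter.mp hf).2, Finset.mem_univ _, rfl⟩
    · intro σ _; rw [hsymm σ y]
  rw [← hperm, Finset.sum_const, Finset.card_univ, Fintype.card_perm, Fintype.card_fin,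
    nsmul_eq_mul]
  ring

lemma lp_disj_norm (p : ℝ≥0∞) [Fact (1 ≤ p)] (hp : p ≠ ∞) (n : ℕ)
    (x : Fin n → lp (fun _ : ℕ => ℝ) p) (hx : ∀ j, ‖x j‖ = 1)
    (hdisj : ∀ j j', j ≠ j' → ∀ t : ℕ, x j t = 0 ∨ x j' t = 0)
    (c : Fin n → ℝ) (hc : ∀ j, |c j| ≤ 1) :
    ‖∑ j, c j • x j‖ ≤ (n : ℝ) ^ ((1 : ℝ) / p.toReal) := by
  classical
  have hq : 1 ≤ p.toReal := by
    rw [← ENNReal.toReal_one]; exact ENNReal.toReal_mono hp Fact.out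
  have hq0 : 0 < p.toReal := lt_of_lt_of_le one_pos hq
  set q := p.toReal with hqdef
  set w : lp (fun _ : ℕ => ℝ) p := ∑ j, c j • x j with hw
  have hwt : ∀ t : ℕ, (w : ℕ → ℝ) t = ∑ j, c j * x j t := by
    intro t
    rw [hw, lp.coeFn_sum]
    simp [Finset.sum_apply]
  -- summability of the comparison function
  have hsx : ∀ j : Fin n, Summable (fun t => |c j| ^ q * ‖x j t‖ ^ q) :=
    fun j => ((lp.hasSum_norm hq0 (x j)).summable).mul_left _
  have hSsum : Summable (fun t : ℕ => ∑ j, |c j| ^ q * ‖x j t‖ ^ q) :=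
    summable_sum fun j _ => hsx j
  have hpt : ∀ t : ℕ, ‖(w : ℕ → ℝ) t‖ ^ q ≤ ∑ j, |c j| ^ q * ‖x j t‖ ^ q := by
    intro t
    rw [hwt t]
    by_cases h : ∀ j, c j * x j t = 0
    · rw [Finset.sum_congr rfl fun j _ => h j, Finset.sum_const_zero]
      rw [norm_zero, Real.zero_rpow (ne_of_gt hq0)]
      exact Finset.sum_nonneg fun j _ => mul_nonneg
        (Real.rpow_nonneg (abs_nonneg _) _) (Real.rpow_nonneg (norm_nonneg _) _)
    · push_neg at h
      obtain ⟨j0, hj0⟩ := h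
      have hx0 : x j0 t ≠ 0 := fun h0 => hj0 (by rw [h0, mul_zero])
      have hz : ∀ j, j ≠ j0 → c j * x j t = 0 := by
        intro j hj
        rcases hdisj j j0 hj t with h1 | h1
        · rw [h1, mul_zero]
        · exact absurd h1 hx0
      rw [Finset.sum_eq_single j0 (fun j _ hj => hz j hj) (fun h => absurd (Finset.mem_univ _) h)]
      have : ‖c j0 * x j0 t‖ ^ q = |c j0| ^ q * ‖x j0 t‖ ^ q := by
        rw [Real.norm_eq_abs, abs_mul, Real.mul_rpow (abs_nonneg _) (abs_nonneg _),
          Real.norm_eq_abs]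
      rw [this]
      exact Finset.single_le_sum (f := fun j => |c j| ^ q * ‖x j t‖ ^ q) (fun j _ => mul_nonneg
        (Real.rpow_nonneg (abs_nonneg _) _) (Real.rpow_nonneg (norm_nonneg _) _))
        (Finset.mem_univ j0)
  have hwq : ‖w‖ ^ q ≤ (n : ℝ) := by
    have h1 : ‖w‖ ^ q = ∑' t, ‖(w : ℕ → ℝ) t‖ ^ q := (lp.hasSum_norm hq0 w).tsum_eq.symm
    rw [h1]
    calc ∑' t, ‖(w : ℕ → ℝ) t‖ ^ q ≤ ∑' t, ∑ j, |c j| ^ q * ‖x j t‖ ^ q :=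
          Summable.tsum_le_tsum hpt (lp.hasSum_norm hq0 w).summable hSsum
      _ = ∑ j, ∑' t, |c j| ^ q * ‖x j t‖ ^ q := Summable.tsum_finsetSum fun j _ => hsx j
      _ = ∑ j, |c j| ^ q * ‖x j‖ ^ q := by
          refine Finset.sum_congr rfl fun j _ => ?_
          rw [tsum_mul_left, (lp.hasSum_norm hq0 (x j)).tsum_eq]
      _ ≤ ∑ j : Fin n, 1 := by
          refine Finset.sum_le_sum fun j _ => ?_
          rw [hx j, Real.one_rpow, mul_one]
          exact Real.rpow_le_one (abs_nonneg _) (hc j) (le_of_lt hq0)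
      _ = (n : ℝ) := by simp
  calc ‖w‖ = (‖w‖ ^ q) ^ (1 / q) := by
        rw [← Real.rpow_mul (norm_nonneg _), mul_one_div, div_self (ne_of_gt hq0),
          Real.rpow_one]
    _ ≤ (n : ℝ) ^ ((1:ℝ) / q) :=
        Real.rpow_le_rpow (Real.rpow_nonneg (norm_nonneg _) _) hwq
          (by positivity)

/-- for a continuous symmetric `m`-linear form `L` on `ℓ^p`
(`1 ≤ p < ∞`) and norm-one vectors `x₁,…,x_n` with pairwise disjoint supports,
`|L(x₁^{k₁} ⋯ x_n^{k_n})| ≤ (k₁^{k₁}⋯k_n^{k_n}/m!) · n^{m/p} · ‖L̂‖`. -/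
theorem stmt_15 (p : ℝ≥0∞) [Fact (1 ≤ p)] (hp : p ≠ ∞)
    (m n : ℕ) (hm : 0 < m) (hn : 0 < n)
    (L : ContinuousMultilinearMap ℝ (fun _ : Fin m => lp (fun _ : ℕ => ℝ) p) ℝ)
    (hsymm : ∀ (σ : Equiv.Perm (Fin m)) (v : Fin m → lp (fun _ : ℕ => ℝ) p),
      L (fun i => v (σ i)) = L v)
    (k : Fin n → ℕ) (hsum : ∑ j, k j = m)
    (x : Fin n → lp (fun _ : ℕ => ℝ) p) (hx : ∀ j, ‖x j‖ = 1)
    (hdisj : ∀ j j', j ≠ j' → ∀ t : ℕ, x j t = 0 ∨ x j' t = 0)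
    (b : Fin m → Fin n)
    (hb : ∀ j, (Finset.univ.filter fun i => b i = j).card = k j) :
    |L (fun i => x (b i))| ≤
      ((∏ j, (k j : ℝ) ^ (k j)) / (Nat.factorial m : ℝ)) *
        (n : ℝ) ^ ((m : ℝ) / p.toReal) *
        sSup {r : ℝ | ∃ z : lp (fun _ : ℕ => ℝ) p, ‖z‖ ≤ 1 ∧ r = |L (fun _ => z)|} := by
  classical
  have hq : 1 ≤ p.toReal := by
    rw [← ENNReal.toReal_one]; exact ENNReal.toReal_mono hp Fact.out
  have hq0 : 0 < p.toReal := lt_of_lt_of_le one_pos hq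
  set q := p.toReal with hqdef
  set Sset := {r : ℝ | ∃ z : lp (fun _ : ℕ => ℝ) p, ‖z‖ ≤ 1 ∧ r = |L (fun _ => z)|}
    with hSset
  set S := sSup Sset with hS
  -- basic properties of S
  have hbdd : BddAbove Sset := by
    refine ⟨‖L‖, fun r hr => ?_⟩
    obtain ⟨z, hz, rfl⟩ := hr
    calc |L (fun _ => z)| = ‖L (fun _ => z)‖ := (Real.norm_eq_abs _).symm
      _ ≤ ‖L‖ * ∏ _i : Fin m, ‖z‖ := L.le_opNorm _
      _ = ‖L‖ * ‖z‖ ^ m := by rw [Finset.prod_const, Finset.card_univ, Fintype.card_fin]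
      _ ≤ ‖L‖ * 1 := by
          exact mul_le_mul_of_nonneg_left (pow_le_one₀ (norm_nonneg _) hz) (norm_nonneg _)
      _ = ‖L‖ := mul_one _
  have hmemS : ∀ z : lp (fun _ : ℕ => ℝ) p, ‖z‖ ≤ 1 → |L (fun _ => z)| ≤ S :=
    fun z hz => le_csSup hbdd ⟨z, hz, rfl⟩
  have hS0 : 0 ≤ S := le_trans (abs_nonneg _) (hmemS 0 (by simp))
  -- every k (b i) is positive
  have hkb : ∀ i, 0 < k (b i) := by
    intro i
    rw [← hb (b i)]
    exact Finset.card_pos.mpr ⟨i, Finset.mem_filter.mpr ⟨Finset.mem_univ _, rfl⟩⟩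
  set y : Fin m → lp (fun _ : ℕ => ℝ) p :=
    fun i => ((k (b i) : ℝ))⁻¹ • x (b i) with hy
  -- fiberwise product identity
  have hfib : ∀ g : Fin n → ℝ, (∏ i, g (b i)) = ∏ j, g j ^ k j := by
    intro g
    rw [← Finset.prod_fiberwise_of_maps_to (g := b) (t := Finset.univ)
      (fun i _ => Finset.mem_univ _) (fun i => g (b i))]
    refine Finset.prod_congr rfl fun j _ => ?_
    rw [Finset.prod_congr rfl (fun i hi => by rw [(Finset.mem_filter.mp hi).2]),
      Finset.prod_const, hb j]
  -- relation between L (x ∘ b) and L y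
  have hLy : L (fun i => x (b i)) = (∏ j, (k j : ℝ) ^ k j) * L y := by
    have h1 : L y = (∏ i, ((k (b i) : ℝ))⁻¹) * L (fun i => x (b i)) := by
      have h2 := L.toMultilinearMap.map_smul_univ
        (fun i => ((k (b i) : ℝ))⁻¹) (fun i => x (b i))
      simp only [ContinuousMultilinearMap.coe_coe, smul_eq_mul] at h2
      exact h2
    rw [h1, hfib (fun j => ((k j : ℝ))⁻¹), ← mul_assoc, ← Finset.prod_mul_distrib]
    have : ∀ j : Fin n, (k j : ℝ) ^ k j * ((k j : ℝ))⁻¹ ^ k j = 1 := by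
      intro j
      rcases Nat.eq_zero_or_pos (k j) with h | h
      · simp [h]
      · rw [← mul_pow, mul_inv_cancel₀ (Nat.cast_ne_zero.mpr (h.ne')), one_pow]
    rw [Finset.prod_congr rfl fun j _ => this j, Finset.prod_const_one, one_mul]
  -- bound each polarization term
  have hterm : ∀ ε : Fin m → Bool,
      |L (fun _ => ∑ i, sgn (ε i) • y i)| ≤ (n : ℝ) ^ ((m : ℝ) / q) * S := by
    intro ε
    set c : Fin n → ℝ :=
      fun j => (∑ i ∈ Finset.univ.filter fun i => b i = j, sgn (ε i)) * ((k j : ℝ))⁻¹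
      with hc
    have hwsum : (∑ i, sgn (ε i) • y i) = ∑ j, c j • x j := by
      rw [hy]
      simp only [smul_smul]
      rw [← Finset.sum_fiberwise_of_maps_to (g := b) (t := Finset.univ)
        (fun i _ => Finset.mem_univ _) (fun i => (sgn (ε i) * ((k (b i) : ℝ))⁻¹) • x (b i))]
      refine Finset.sum_congr rfl fun j _ => ?_
      rw [Finset.sum_congr rfl (fun i hi => by rw [(Finset.mem_filter.mp hi).2]),
        ← Finset.sum_smul, hc]
      congr 1
      rw [← Finset.sum_mul]
    have hcle : ∀ j, |c j| ≤ 1 := by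
      intro j
      rw [hc, abs_mul, abs_inv, Nat.abs_cast]
      calc |∑ i ∈ Finset.univ.filter fun i => b i = j, sgn (ε i)| * ((k j : ℝ))⁻¹
          ≤ (∑ i ∈ Finset.univ.filter fun i => b i = j, |sgn (ε i)|) * ((k j : ℝ))⁻¹ :=
            mul_le_mul_of_nonneg_right (Finset.abs_sum_le_sum_abs _ _)
              (inv_nonneg.mpr (Nat.cast_nonneg _))
        _ = (k j : ℝ) * ((k j : ℝ))⁻¹ := by
            rw [Finset.sum_congr rfl fun i _ => sgn_abs _, Finset.sum_const, hb j,
              nsmul_eq_mul, mul_one]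
        _ ≤ 1 := by
            rcases Nat.eq_zero_or_pos (k j) with h | h
            · simp [h]
            · rw [mul_inv_cancel₀ (Nat.cast_ne_zero.mpr (h.ne'))]
    have hnorm : ‖∑ i, sgn (ε i) • y i‖ ≤ (n : ℝ) ^ ((1 : ℝ) / q) := by
      rw [hwsum]; exact lp_disj_norm p hp n x hx hdisj c hcle
    set N : ℝ := (n : ℝ) ^ ((1 : ℝ) / q) with hN
    have hNpos : 0 < N := Real.rpow_pos_of_pos (Nat.cast_pos.mpr hn) _
    set w : lp (fun _ : ℕ => ℝ) p := ∑ i, sgn (ε i) • y i with hwdef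
    set z : lp (fun _ : ℕ => ℝ) p := N⁻¹ • w with hz
    have hz1 : ‖z‖ ≤ 1 := by
      rw [hz, norm_smul, norm_inv, Real.norm_eq_abs, abs_of_pos hNpos]
      exact inv_mul_le_one_of_le₀ hnorm (le_of_lt hNpos)
    have hwz : w = N • z := by rw [hz, smul_inv_smul₀ (ne_of_gt hNpos)]
    have hLw : L (fun _ => w) = N ^ m * L (fun _ => z) := by
      rw [hwz]
      have h2 := L.toMultilinearMap.map_smul_univ (fun _ : Fin m => N) (fun _ => z)
      simp only [ContinuousMultilinearMap.coe_coe, smul_eq_mul, Finset.prod_const,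
        Finset.card_univ, Fintype.card_fin] at h2
      exact h2
    rw [hLw, abs_mul, abs_of_nonneg (pow_nonneg (le_of_lt hNpos) m)]
    have hNm : N ^ m = (n : ℝ) ^ ((m : ℝ) / q) := by
      rw [hN, ← Real.rpow_natCast ((n : ℝ) ^ ((1:ℝ)/q)) m,
        ← Real.rpow_mul (Nat.cast_nonneg n), one_div, inv_mul_eq_div]
    rw [hNm]
    exact mul_le_mul_of_nonneg_left (hmemS z hz1)
      (Real.rpow_nonneg (Nat.cast_nonneg n) _)
  -- polarization bound on |L y|
  have hpol := polarization m L hsymm y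
  have hLybound : (2 ^ m * m.factorial : ℝ) * |L y| ≤
      2 ^ m * ((n : ℝ) ^ ((m : ℝ) / q) * S) := by
    have habs : (2 ^ m * m.factorial : ℝ) * |L y|
        = |(2 ^ m * m.factorial : ℝ) * L y| := by
      rw [abs_mul, abs_of_nonneg (show (0:ℝ) ≤ 2 ^ m * m.factorial by positivity)]
    rw [habs, hpol]
    calc |∑ ε : Fin m → Bool, (∏ i, sgn (ε i)) * L (fun _ => ∑ i, sgn (ε i) • y i)|
        ≤ ∑ ε : Fin m → Bool, |(∏ i, sgn (ε i)) * L (fun _ => ∑ i, sgn (ε i) • y i)| :=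
          Finset.abs_sum_le_sum_abs _ _
      _ ≤ ∑ _ε : Fin m → Bool, (n : ℝ) ^ ((m : ℝ) / q) * S := by
          refine Finset.sum_le_sum fun ε _ => ?_
          rw [abs_mul, Finset.abs_prod,
            Finset.prod_congr rfl fun i _ => sgn_abs (ε i), Finset.prod_const_one, one_mul]
          exact hterm ε
      _ = 2 ^ m * ((n : ℝ) ^ ((m : ℝ) / q) * S) := by
          rw [Finset.sum_const, Finset.card_univ, nsmul_eq_mul]
          norm_num
  have hLyb : |L y| ≤ (n : ℝ) ^ ((m : ℝ) / q) * S / m.factorial := by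
    have h2 : (0:ℝ) < 2 ^ m * m.factorial := by positivity
    rw [le_div_iff₀ (by positivity : (0:ℝ) < (m.factorial : ℝ))]
    nlinarith [hLybound, pow_pos (by norm_num : (0:ℝ) < 2) m]
  -- conclude
  rw [hLy, abs_mul, abs_of_nonneg (Finset.prod_nonneg fun j _ =>
    pow_nonneg (Nat.cast_nonneg _) _)]
  calc (∏ j, (k j : ℝ) ^ k j) * |L y|
      ≤ (∏ j, (k j : ℝ) ^ k j) * ((n : ℝ) ^ ((m : ℝ) / q) * S / m.factorial) :=
        mul_le_mul_of_nonneg_left hLyb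
          (Finset.prod_nonneg fun j _ => pow_nonneg (Nat.cast_nonneg _) _)
    _ = (∏ j, (k j : ℝ) ^ k j) / m.factorial * (n : ℝ) ^ ((m : ℝ) / q) * S := by
        ring
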